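/- arXiv:0810.2983 — 3 statements merged into one kernel-verified Lean document; each statement's English description precedes it below -/
import Mathlib

section
/- The curves t ↦ (t, -t⁻¹, -t, t⁻¹) and t ↦ (t, t⁻¹, -t, -t⁻¹), for t ∈ ℂ*, are solutions of the cyclic 4-roots system: x₁+x₂+x₃+x₄ = 0, x₁x₂+x₂x₃+x₃x₄+x₄x₁ = 0, x₁x₂x₃+x₂x₃x₄+x₃x₄x₁+x₄x₁x₂ = 0, x₁x₂x₃x₄ - 1 = 0. -/
/-!
The points `(a, b, -a, -b)` kill the first three cyclic 4-roots polynomials identically,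
since their terms cancel in pairs, and the last one becomes `(a b)² - 1`.
Both curves are of this shape with `a b = ∓1`.
-/

def IsCyclicFourRoot {R : Type*} [CommRing R] (x₁ x₂ x₃ x₄ : R) : Prop :=
  x₁ + x₂ + x₃ + x₄ = 0 ∧
  x₁ * x₂ + x₂ * x₃ + x₃ * x₄ + x₄ * x₁ = 0 ∧
  x₁ * x₂ * x₃ + x₂ * x₃ * x₄ + x₃ * x₄ * x₁ + x₄ * x₁ * x₂ = 0 ∧
  x₁ * x₂ * x₃ * x₄ - 1 = 0

theorem isCyclicFourRoot_neg_neg {R : Type*} [CommRing R] {a b : R} (h : (a * b) ^ 2 = 1) :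
    IsCyclicFourRoot a b (-a) (-b) := by
  refine ⟨by ring, by ring, by ring, ?_⟩
  linear_combination h

/-- The curves `t ↦ (t, -t⁻¹, -t, t⁻¹)` and `t ↦ (t, t⁻¹, -t, -t⁻¹)`, for
`t ∈ ℂ*`, are solutions of the cyclic 4-roots system. -/
theorem stmt7 (t : ℂ) (ht : t ≠ 0) :
    (∀ x₁ x₂ x₃ x₄ : ℂ,
      ((x₁, x₂, x₃, x₄) = (t, -t⁻¹, -t, t⁻¹) ∨
       (x₁, x₂, x₃, x₄) = (t, t⁻¹, -t, -t⁻¹)) →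
      x₁ + x₂ + x₃ + x₄ = 0 ∧
      x₁ * x₂ + x₂ * x₃ + x₃ * x₄ + x₄ * x₁ = 0 ∧
      x₁ * x₂ * x₃ + x₂ * x₃ * x₄ + x₃ * x₄ * x₁ + x₄ * x₁ * x₂ = 0 ∧
      x₁ * x₂ * x₃ * x₄ - 1 = 0) := by
  have hinv : t * t⁻¹ = 1 := mul_inv_cancel₀ ht
  rintro x₁ x₂ x₃ x₄ (h | h) <;> simp only [Prod.mk.injEq] at h <;>
    obtain ⟨h₁, h₂, h₃, h₄⟩ := h <;> subst x₁ x₂ x₃ x₄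
  · have h := isCyclicFourRoot_neg_neg (a := t) (b := -t⁻¹) (by rw [mul_neg, hinv, neg_one_sq])
    rwa [neg_neg] at h
  · exact isCyclicFourRoot_neg_neg (by rw [hinv, one_pow])
end

section
/- The cyclic 4-roots system has no isolated solutions in (ℂ*)⁴: every solution (a,b,c,d) in (ℂ*)⁴ of x₁+x₂+x₃+x₄=0, x₁x₂+x₂x₃+x₃x₄+x₄x₁=0, x₁x₂x₃+x₂x₃x₄+x₃x₄x₁+x₄x₁x₂=0, x₁x₂x₃x₄=1 satisfies c = -a and d = -b with ab = ±1, hence lies on one of the two one-parameter families (t,-t⁻¹,-t,t⁻¹) or (t,t⁻¹,-t,-t⁻¹). -/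
/-- The cyclic 4-roots system has no isolated solutions in `(ℂ*)⁴`: every
solution `(a,b,c,d)` satisfies `c = -a`, `d = -b` and `ab = ±1`, hence lies on
one of the two one-parameter families `(t,-t⁻¹,-t,t⁻¹)` or `(t,t⁻¹,-t,-t⁻¹)`. -/
theorem stmt8 (a b c d : ℂ) (ha : a ≠ 0) (hb : b ≠ 0) (hc : c ≠ 0) (hd : d ≠ 0)
    (h1 : a + b + c + d = 0)
    (h2 : a * b + b * c + c * d + d * a = 0)
    (h3 : a * b * c + b * c * d + c * d * a + d * a * b = 0)
    (h4 : a * b * c * d = 1) :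
    c = -a ∧ d = -b ∧ (a * b = 1 ∨ a * b = -1) ∧
      ∃ t : ℂ, t ≠ 0 ∧
        ((a, b, c, d) = (t, -t⁻¹, -t, t⁻¹) ∨ (a, b, c, d) = (t, t⁻¹, -t, -t⁻¹)) := by
  have hfac : (a + c) * (b + d) = 0 := by linear_combination h2
  have hcd : c = -a ∧ d = -b := by
    rcases mul_eq_zero.mp hfac with h | h
    · exact ⟨by linear_combination h, by linear_combination h1 - h⟩
    · exact ⟨by linear_combination h1 - h, by linear_combination h⟩
  obtain ⟨hc', hd'⟩ := hcd
  subst hc' hd'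
  have hsq : (a * b - 1) * (a * b + 1) = 0 := by linear_combination h4
  rcases mul_eq_zero.mp hsq with h | h
  · have hab : a * b = 1 := by linear_combination h
    refine ⟨rfl, rfl, Or.inl hab, a, ha, Or.inr ?_⟩
    have : b = a⁻¹ := by field_simp; linear_combination hab
    simp [this]
  · have hab : a * b = -1 := by linear_combination h
    refine ⟨rfl, rfl, Or.inr hab, a, ha, Or.inl ?_⟩
    have : b = -a⁻¹ := by field_simp; linear_combination hab
    simp [this]
end

section
/- The curve t ↦ (x₁,...,x₁₂) with x₁ = t, x₂ = t⁻¹(1/2 - (√3/2)i), x₃ = -t, x₄ = t⁻¹(-1/2 - (√3/2)i), x₅ = t(-1/2 + (√3/2)i), x₆ = t⁻¹(1/2 + (√3/2)i), x₇ = -t, x₈ = t⁻¹(-1/2 + (√3/2)i), x₉ = t, x₁₀ = t⁻¹(1/2 + (√3/2)i), x₁₁ = t(1/2 - (√3/2)i), x₁₂ = t⁻¹(-1/2 - (√3/2)i), for t ∈ ℂ*, satisfies all twelve equations of the cyclic 12-roots system exactly. -/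
open Complex Finset

/-- The `k`-th cyclic equation: `Σ_{j} Π_{i=0}^{k-1} x_{j+i}` with indices
taken cyclically modulo `n`. -/
noncomputable def cyclicEq (n : ℕ) [NeZero n] (k : ℕ) (x : ZMod n → ℂ) : ℂ :=
  ∑ j : ZMod n, ∏ i ∈ Finset.range k, x (j + (i : ZMod n))

/-- `x` is a cyclic `n`-roots solution if the first `n-1` cyclic equations
vanish and the product of all coordinates is 1. -/
def IsCyclicRoot (n : ℕ) [NeZero n] (x : ZMod n → ℂ) : Prop :=
  (∀ k, 1 ≤ k → k < n → cyclicEq n k x = 0) ∧ ∏ j : ZMod n, x j = 1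

/-!
Put ζ = 1/2 - (√3/2)i, a primitive sixth root of unity. The curve has coordinates ±t ζ^a at even
and ±t⁻¹ ζ^a at odd positions, so a product of k consecutive coordinates is a power of ζ times
t^0 (k even) or t^{±1} (k odd). Each cyclic equation thus becomes an identity in ℤ[ζ][t, t⁻¹],
which holds modulo ζ² - ζ + 1.
-/

@[to_additive]
theorem ZMod.prod_eq_prod_range {M : Type*} [CommMonoid M] (n : ℕ) [NeZero n]
    (f : ZMod n → M) : ∏ j : ZMod n, f j = ∏ j ∈ range n, f j :=
  prod_nbij' ZMod.val Nat.cast (fun j _ => mem_range.2 (ZMod.val_lt j))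
    (fun _ _ => mem_univ _) (fun j _ => ZMod.natCast_zmod_val j)
    (fun _ hm => ZMod.val_cast_of_lt (mem_range.1 hm)) (fun j _ => by rw [ZMod.natCast_zmod_val])

theorem isPrimitiveRoot_six_iff {R : Type*} [CommRing R] [IsDomain R] [CharZero R] {ζ : R} :
    IsPrimitiveRoot ζ 6 ↔ ζ ^ 2 - ζ + 1 = 0 := by
  rw [← Polynomial.isRoot_cyclotomic_iff_charZero (by norm_num), Polynomial.cyclotomic_six]
  simp

noncomputable def cyclicTwelveCurve (ζ t : ℂ) : ZMod 12 → ℂ := fun j =>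
  ![t, t⁻¹ * ζ, -t, t⁻¹ * ζ ^ 2, -t * ζ, -t⁻¹ * ζ ^ 2,
    -t, -t⁻¹ * ζ, t, -t⁻¹ * ζ ^ 2, t * ζ, t⁻¹ * ζ ^ 2] (Fin.ofNat 12 j.val)

section

variable {ζ t : ℂ}

theorem cyclicEq_cyclicTwelveCurve (hζ : ζ ^ 2 - ζ + 1 = 0) {k : ℕ} (hk₀ : 1 ≤ k) (hk : k < 12) :
    cyclicEq 12 k (cyclicTwelveCurve ζ t) = 0 := by
  rw [cyclicEq, ZMod.sum_eq_sum_range]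
  interval_cases k <;>
  · simp only [sum_range_succ, prod_range_succ, sum_range_zero, prod_range_zero, ← Nat.cast_add,
      Nat.reduceAdd, cyclicTwelveCurve, ZMod.val_natCast, Nat.reduceMod, Fin.ofNat, Fin.reduceFinMk,
      Matrix.cons_val]
    grind

theorem prod_cyclicTwelveCurve (hζ : ζ ^ 2 - ζ + 1 = 0) (ht : t ≠ 0) :
    ∏ j, cyclicTwelveCurve ζ t j = 1 := by
  rw [ZMod.prod_eq_prod_range]
  simp only [prod_range_succ, prod_range_zero, cyclicTwelveCurve, ZMod.val_natCast, Nat.reduceMod,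
    Fin.ofNat, Fin.reduceFinMk, Matrix.cons_val]
  grind [mul_inv_cancel₀ ht]

theorem isCyclicRoot_cyclicTwelveCurve (hζ : IsPrimitiveRoot ζ 6) (ht : t ≠ 0) :
    IsCyclicRoot 12 (cyclicTwelveCurve ζ t) := by
  rw [isPrimitiveRoot_six_iff] at hζ
  exact ⟨fun _ hk₀ hk => cyclicEq_cyclicTwelveCurve hζ hk₀ hk, prod_cyclicTwelveCurve hζ ht⟩

end

/-- The explicit curve `t ↦ (x₁,...,x₁₂)` solves the cyclic 12-roots system
exactly for every `t ∈ ℂ*`. -/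
theorem stmt16 (t : ℂ) (ht : t ≠ 0) :
    let ω : ℂ := (Real.sqrt 3 / 2 : ℝ) * I
    let x : ZMod 12 → ℂ := fun j =>
      ![t, t⁻¹ * (1/2 - ω), -t, t⁻¹ * (-(1/2) - ω),
        t * (-(1/2) + ω), t⁻¹ * (1/2 + ω), -t, t⁻¹ * (-(1/2) + ω),
        t, t⁻¹ * (1/2 + ω), t * (1/2 - ω), t⁻¹ * (-(1/2) - ω)] (Fin.ofNat 12 j.val)
    IsCyclicRoot 12 x := by
  intro ω x
  have hω : ω ^ 2 = -(3 / 4) := by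
    have h3 : ((Real.sqrt 3 : ℝ) : ℂ) ^ 2 = 3 := by
      rw [← ofReal_pow, Real.sq_sqrt zero_le_three, ofReal_ofNat]
    simp only [ω, ofReal_div, ofReal_ofNat]
    linear_combination (-1 / 4 : ℂ) * h3 + ((Real.sqrt 3 : ℂ) ^ 2 / 4) * I_sq
  have hζ : (1 / 2 - ω) ^ 2 = -(1 / 2) - ω := by linear_combination hω
  have hx : x = cyclicTwelveCurve (1 / 2 - ω) t := by
    funext j
    simp only [x, cyclicTwelveCurve, hζ]
    congr 1
    ext i
    fin_cases i <;> simp only [Fin.reduceFinMk, Matrix.cons_val] <;> ring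
  rw [hx]
  exact isCyclicRoot_cyclicTwelveCurve (isPrimitiveRoot_six_iff.2 (by linear_combination hω)) ht
end
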